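/- arXiv:1706.06540 — 3 statements merged into one kernel-verified Lean document; each statement's English description precedes it below -/
import Mathlib

section
/- Let (L, [·,·], Δ, α) be a Hom-Lie superbialgebra and let β : L → L be an even linear map which is a morphism of Hom-Lie superbialgebras (i.e. α∘β = β∘α, β∘[·,·] = [·,·]∘β^{⊗2} and Δ∘β = β^{⊗2}∘Δ). Then L_β = (L, [·,·]_β, Δ_β, βα), where [x,y]_β = β([x,y]) and Δ_β = Δ∘β, is again a Hom-Lie superbialgebra; moreover L_β is multiplicative whenever L is. -/
open TensorProduct

variable (K : Type*) [Field K] [CharZero K]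

/-- The super sign `(-1)^{p·q}` for parities `p q : ZMod 2`. -/
def eps (p q : ZMod 2) : K := (-1 : K) ^ (p.val * q.val)

variable {K}

section Defs

variable {L M : Type*} [AddCommGroup L] [Module K L] [AddCommGroup M] [Module K M]

/-- `x` is homogeneous of parity `p` with respect to the grading involution `σ`
(`σ` acts as `(-1)^i` on the degree-`i` part of the `ℤ₂`-graded space). -/
def IsHomog (σ : L →ₗ[K] L) (p : ZMod 2) (x : L) : Prop :=
  σ x = ((-1 : K) ^ p.val) • x

/-- The operator multiplying a homogeneous element of parity `q` by `(-1)^{p·q}`. -/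
noncomputable def signPow (σ : L →ₗ[K] L) (p : ZMod 2) : L →ₗ[K] L :=
  ((2 : K)⁻¹ * (1 + (-1 : K) ^ p.val)) • (LinearMap.id : L →ₗ[K] L)
    + ((2 : K)⁻¹ * (1 - (-1 : K) ^ p.val)) • σ

/-- The operator multiplying `x ⊗ y` (with `x, y` homogeneous of parities `p, q`)
by the Koszul sign `(-1)^{p·q}`. -/
noncomputable def signOp (σL : L →ₗ[K] L) (σM : M →ₗ[K] M) :
    L ⊗[K] M →ₗ[K] L ⊗[K] M :=
  (2 : K)⁻¹ • ((LinearMap.id : L ⊗[K] M →ₗ[K] L ⊗[K] M)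
    + TensorProduct.map σL LinearMap.id
    + TensorProduct.map LinearMap.id σM
    - TensorProduct.map σL σM)

/-- The super twist `τ(x ⊗ y) = (-1)^{|x||y|} y ⊗ x`. -/
noncomputable def superTwist (σ : L →ₗ[K] L) : L ⊗[K] L →ₗ[K] L ⊗[K] L :=
  (TensorProduct.comm K L L).toLinearMap ∘ₗ signOp σ σ

/-- The super cyclic map `ξ(x ⊗ y ⊗ z) = (-1)^{|x|(|y|+|z|)} y ⊗ z ⊗ x`. -/
noncomputable def superCyclic (σ : L →ₗ[K] L) :
    L ⊗[K] (L ⊗[K] L) →ₗ[K] L ⊗[K] (L ⊗[K] L) :=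
  (TensorProduct.assoc K L L L).toLinearMap
    ∘ₗ (TensorProduct.comm K L (L ⊗[K] L)).toLinearMap
    ∘ₗ signOp σ (TensorProduct.map σ σ)

/-- The adjoint action `ad_x` on `L ⊗ L`, for `x` homogeneous of parity `p`:
`ad_x(y₁ ⊗ y₂) = [x,y₁] ⊗ α(y₂) + (-1)^{|x||y₁|} α(y₁) ⊗ [x,y₂]`. -/
noncomputable def adT (σ : L →ₗ[K] L) (br : L →ₗ[K] L →ₗ[K] L) (α : L →ₗ[K] L)
    (p : ZMod 2) (x : L) : L ⊗[K] L →ₗ[K] L ⊗[K] L :=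
  TensorProduct.map (br x) α + TensorProduct.map (α ∘ₗ signPow σ p) (br x)

/-- The adjoint action `ad_x` on `L ⊗ (L ⊗ L)`, for `x` homogeneous of parity `p`. -/
noncomputable def adT3 (σ : L →ₗ[K] L) (br : L →ₗ[K] L →ₗ[K] L) (α : L →ₗ[K] L)
    (p : ZMod 2) (x : L) :
    L ⊗[K] (L ⊗[K] L) →ₗ[K] L ⊗[K] (L ⊗[K] L) :=
  TensorProduct.map (br x) (TensorProduct.map α α)
    + TensorProduct.map (α ∘ₗ signPow σ p) (TensorProduct.map (br x) α)
    + TensorProduct.map (α ∘ₗ signPow σ p)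
        (TensorProduct.map (α ∘ₗ signPow σ p) (br x))

/-- A Hom-Lie superalgebra `(L, [·,·], α)` with grading involution `σ`:
the bracket and `α` are even, the bracket is skew-supersymmetric and
satisfies the Hom-super-Jacobi identity. -/
def IsHomLieSuperalgebra (σ : L →ₗ[K] L) (br : L →ₗ[K] L →ₗ[K] L) (α : L →ₗ[K] L) : Prop :=
  σ ∘ₗ σ = LinearMap.id
  ∧ (∀ x y, σ (br x y) = br (σ x) (σ y))
  ∧ (∀ x, σ (α x) = α (σ x))
  ∧ (∀ p q x y, IsHomog σ p x → IsHomog σ q y → br x y = -(eps K p q) • br y x)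
  ∧ (∀ p q r x y z, IsHomog σ p x → IsHomog σ q y → IsHomog σ r z →
      eps K p r • br (α x) (br y z) + eps K r q • br (α z) (br x y)
        + eps K q p • br (α y) (br z x) = 0)

/-- Multiplicativity: `α([x,y]) = [α(x), α(y)]`. -/
def IsMultiplicative (br : L →ₗ[K] L →ₗ[K] L) (α : L →ₗ[K] L) : Prop :=
  ∀ x y, α (br x y) = br (α x) (α y)

/-- A Hom-Lie supercoalgebra `(L, Δ, α)` with grading involution `σ`. -/
def IsHomLieSupercoalgebra (σ α : L →ₗ[K] L) (Δ : L →ₗ[K] L ⊗[K] L) : Prop :=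
  σ ∘ₗ σ = LinearMap.id
  ∧ (∀ x, σ (α x) = α (σ x))
  ∧ TensorProduct.map σ σ ∘ₗ Δ = Δ ∘ₗ σ
  ∧ (∀ x, ∃ u, Δ x = u - superTwist σ u)
  ∧ (LinearMap.id + superCyclic σ + superCyclic σ ∘ₗ superCyclic σ)
      ∘ₗ TensorProduct.map α Δ ∘ₗ Δ = 0

/-- Co-multiplicativity: `Δ ∘ α = α^{⊗2} ∘ Δ`. -/
def IsComultiplicative (α : L →ₗ[K] L) (Δ : L →ₗ[K] L ⊗[K] L) : Prop :=
  Δ ∘ₗ α = TensorProduct.map α α ∘ₗ Δ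

/-- A Hom-Lie superbialgebra `(L, [·,·], Δ, α)`. -/
def IsHomLieSuperbialgebra (σ : L →ₗ[K] L) (br : L →ₗ[K] L →ₗ[K] L) (α : L →ₗ[K] L)
    (Δ : L →ₗ[K] L ⊗[K] L) : Prop :=
  IsHomLieSuperalgebra σ br α
  ∧ IsHomLieSupercoalgebra σ α Δ
  ∧ ∀ p q x y, IsHomog σ p x → IsHomog σ q y →
      Δ (br x y) = adT σ br α p (α x) (Δ y) - eps K p q • adT σ br α q (α y) (Δ x)

/-- A multiplicative Hom-Lie superbialgebra. -/
def IsMultHomLieSuperbialgebra (σ : L →ₗ[K] L) (br : L →ₗ[K] L →ₗ[K] L) (α : L →ₗ[K] L)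
    (Δ : L →ₗ[K] L ⊗[K] L) : Prop :=
  IsHomLieSuperbialgebra σ br α Δ ∧ IsMultiplicative br α ∧ IsComultiplicative α Δ

/-- An admissible Hom-Lie superalgebra: `[(Id - α²)(x), α(y)] = 0`. -/
def IsAdmissible (σ : L →ₗ[K] L) (br : L →ₗ[K] L →ₗ[K] L) (α : L →ₗ[K] L) : Prop :=
  IsHomLieSuperalgebra σ br α ∧ ∀ x y, br (x - α (α x)) (α y) = 0

/-- A morphism of Hom-Lie superbialgebras: an even linear map commuting with the
twist maps, the brackets and the cobrackets. -/
def IsBialgMorphism {L₂ : Type*} [AddCommGroup L₂] [Module K L₂]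
    (σ₁ : L →ₗ[K] L) (br₁ : L →ₗ[K] L →ₗ[K] L) (α₁ : L →ₗ[K] L) (Δ₁ : L →ₗ[K] L ⊗[K] L)
    (σ₂ : L₂ →ₗ[K] L₂) (br₂ : L₂ →ₗ[K] L₂ →ₗ[K] L₂) (α₂ : L₂ →ₗ[K] L₂)
    (Δ₂ : L₂ →ₗ[K] L₂ ⊗[K] L₂) (f : L →ₗ[K] L₂) : Prop :=
  (∀ x, σ₂ (f x) = f (σ₁ x)) ∧ (∀ x, α₂ (f x) = f (α₁ x))
  ∧ (∀ x y, f (br₁ x y) = br₂ (f x) (f y))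
  ∧ TensorProduct.map f f ∘ₗ Δ₁ = Δ₂ ∘ₗ f

/-- A representation `ρ` of the Hom-Lie superalgebra `(L, br, αg)` on `(M, σM)`
with respect to `A`. -/
def IsRepresentation (σg : L →ₗ[K] L) (br : L →ₗ[K] L →ₗ[K] L) (αg : L →ₗ[K] L)
    (σM A : M →ₗ[K] M) (ρ : L →ₗ[K] M →ₗ[K] M) : Prop :=
  (∀ x v, σM (ρ x v) = ρ (σg x) (σM v))
  ∧ (∀ x, ρ (αg x) ∘ₗ A = A ∘ₗ ρ x)
  ∧ (∀ p q x y, IsHomog σg p x → IsHomog σg q y →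
      ρ (br x y) ∘ₗ A = ρ (αg x) ∘ₗ ρ y - eps K p q • (ρ (αg y) ∘ₗ ρ x))

/-- The signed middle-four interchange
`(r₁ ⊗ r₂) ⊗ (r₁' ⊗ r₂') ↦ (-1)^{|r₂||r₁'|} (r₁ ⊗ r₁') ⊗ (r₂ ⊗ r₂')`. -/
noncomputable def signedMidSwap (σ : L →ₗ[K] L) :
    (L ⊗[K] L) ⊗[K] (L ⊗[K] L) →ₗ[K] (L ⊗[K] L) ⊗[K] (L ⊗[K] L) :=
  (TensorProduct.assoc K (L ⊗[K] L) L L).toLinearMap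
    ∘ₗ TensorProduct.map (TensorProduct.assoc K L L L).symm.toLinearMap LinearMap.id
    ∘ₗ TensorProduct.map (TensorProduct.map LinearMap.id (superTwist σ)) LinearMap.id
    ∘ₗ TensorProduct.map (TensorProduct.assoc K L L L).toLinearMap LinearMap.id
    ∘ₗ (TensorProduct.assoc K (L ⊗[K] L) L L).symm.toLinearMap

/-- `[r₁₂, r'₁₃] = Σ (-1)^{|r'₁||r₂|} [r₁,r'₁] ⊗ α(r₂) ⊗ α(r'₂)`. -/
noncomputable def br1213 (σ : L →ₗ[K] L) (br : L →ₗ[K] L →ₗ[K] L) (α : L →ₗ[K] L)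
    (r r' : L ⊗[K] L) : L ⊗[K] (L ⊗[K] L) :=
  TensorProduct.map (TensorProduct.lift br) (TensorProduct.map α α)
    (signedMidSwap σ (r ⊗ₜ[K] r'))

/-- `[r₁₂, r'₂₃] = Σ α(r₁) ⊗ [r₂,r'₁] ⊗ α(r'₂)`. -/
noncomputable def br1223 (br : L →ₗ[K] L →ₗ[K] L) (α : L →ₗ[K] L)
    (r r' : L ⊗[K] L) : L ⊗[K] (L ⊗[K] L) :=
  TensorProduct.map α
      (TensorProduct.map (TensorProduct.lift br) α
        ∘ₗ (TensorProduct.assoc K L L L).symm.toLinearMap)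
    ((TensorProduct.assoc K L L (L ⊗[K] L)).toLinearMap (r ⊗ₜ[K] r'))

/-- `[r₁₃, r'₂₃] = Σ (-1)^{|r'₁||r₂|} α(r₁) ⊗ α(r'₁) ⊗ [r₂,r'₂]`. -/
noncomputable def br1323 (σ : L →ₗ[K] L) (br : L →ₗ[K] L →ₗ[K] L) (α : L →ₗ[K] L)
    (r r' : L ⊗[K] L) : L ⊗[K] (L ⊗[K] L) :=
  (TensorProduct.assoc K L L L).toLinearMap
    (TensorProduct.map (TensorProduct.map α α) (TensorProduct.lift br)
      (signedMidSwap σ (r ⊗ₜ[K] r')))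

/-- The left-hand side `[[r,r]]^α` of the classical Hom-Yang-Baxter equation. -/
noncomputable def chybeEl (σ : L →ₗ[K] L) (br : L →ₗ[K] L →ₗ[K] L) (α : L →ₗ[K] L)
    (r : L ⊗[K] L) : L ⊗[K] (L ⊗[K] L) :=
  br1213 σ br α r r + br1223 br α r r + br1323 σ br α r r

/-- A coboundary Hom-Lie superbialgebra. -/
def IsCoboundary (σ : L →ₗ[K] L) (br : L →ₗ[K] L →ₗ[K] L) (α : L →ₗ[K] L)
    (Δ : L →ₗ[K] L ⊗[K] L) (r : L ⊗[K] L) : Prop :=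
  IsHomLieSuperbialgebra σ br α Δ
  ∧ TensorProduct.map α α r = r
  ∧ ∀ p x, IsHomog σ p x → Δ x = adT σ br α p x r

/-- A quasi-triangular Hom-Lie superbialgebra: a coboundary one where `r`
satisfies the classical Hom-Yang-Baxter equation. -/
def IsQuasiTriangular (σ : L →ₗ[K] L) (br : L →ₗ[K] L →ₗ[K] L) (α : L →ₗ[K] L)
    (Δ : L →ₗ[K] L ⊗[K] L) (r : L ⊗[K] L) : Prop :=
  IsCoboundary σ br α Δ r ∧ chybeEl σ br α r = 0

/-- The global linear map `x ↦ ad_x(r) = Σ [x,r₁] ⊗ α(r₂) + (-1)^{|x||r₁|} α(r₁) ⊗ [x,r₂]`. -/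
noncomputable def adMap (σ : L →ₗ[K] L) (br : L →ₗ[K] L →ₗ[K] L) (α : L →ₗ[K] L)
    (r : L ⊗[K] L) : L →ₗ[K] L ⊗[K] L :=
  (TensorProduct.map (TensorProduct.lift br) α
      ∘ₗ (TensorProduct.assoc K L L L).symm.toLinearMap
    + TensorProduct.map α (TensorProduct.lift br)
        ∘ₗ (TensorProduct.assoc K L L L).toLinearMap
        ∘ₗ TensorProduct.map (superTwist σ) LinearMap.id
        ∘ₗ (TensorProduct.assoc K L L L).symm.toLinearMap)
  ∘ₗ (TensorProduct.mk K L (L ⊗[K] L)).flip r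

end Defs

/-!
Since `β` commutes with `σ`, `α`, the bracket and the cobracket, every defining identity of
`L_β` is the corresponding identity of `L` pushed forward twice by `β`: the Hom-Jacobi identity
of `[·,·]_β` is `β²` applied to that of `[·,·]`, the Hom-co-Jacobi identity of `Δ_β` is
`(β ⊗ β ⊗ β)²` applied to that of `Δ` (the super cyclic map commutes with `β ⊗ β ⊗ β` because
`β` is even), and the compatibility condition is `(β ⊗ β)²` applied to that of `L`.
-/

section Twist

variable {K : Type*} [Field K] {L : Type*} [AddCommGroup L] [Module K L]
  {σ α β : L →ₗ[K] L} {br : L →ₗ[K] L →ₗ[K] L} {Δ : L →ₗ[K] L ⊗[K] L}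

theorem superCyclic_comp_map_map_map (hβσ : ∀ x, σ (β x) = β (σ x)) :
    superCyclic σ ∘ₗ map β (map β β) = map β (map β β) ∘ₗ superCyclic σ := by
  refine TensorProduct.ext' fun x w => ?_
  induction w using TensorProduct.induction_on with
  | zero => simp
  | tmul y z =>
      simp only [LinearMap.comp_apply, map_tmul, superCyclic, signOp, LinearMap.smul_apply,
        LinearMap.add_apply, LinearMap.sub_apply, LinearMap.id_apply, map_add, map_sub,
        map_smul, comm_tmul, assoc_tmul, LinearEquiv.coe_coe, hβσ]
  | add u v hu hv => simp only [tmul_add, map_add, hu, hv]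

theorem IsHomLieSuperalgebra.twist (h : IsHomLieSuperalgebra σ br α)
    (hβσ : ∀ x, σ (β x) = β (σ x)) (hβbr : ∀ x y, β (br x y) = br (β x) (β y)) :
    IsHomLieSuperalgebra σ (br.compr₂ β) (β ∘ₗ α) := by
  obtain ⟨hσσ, hσbr, hσα, hskew, hjac⟩ := h
  refine ⟨hσσ, fun x y => ?_, fun x => ?_, fun p q x y hx hy => ?_,
    fun p q r x y z hx hy hz => ?_⟩
  · simp only [LinearMap.compr₂_apply, hβσ, hσbr]
  · simp only [LinearMap.comp_apply, hβσ, hσα]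
  · simp only [LinearMap.compr₂_apply, hskew p q x y hx hy, map_smul]
  · have hβ_jac := congrArg (β ∘ β) (hjac p q r x y z hx hy hz)
    simpa only [Function.comp_apply, map_add, map_smul, map_zero, hβbr,
      LinearMap.compr₂_apply, LinearMap.comp_apply] using hβ_jac

theorem map_twist_comp_twist (hβα : ∀ x, α (β x) = β (α x))
    (hβΔ : map β β ∘ₗ Δ = Δ ∘ₗ β) :
    map (β ∘ₗ α) (Δ ∘ₗ β) ∘ₗ Δ ∘ₗ β
      = map β (map β β) ∘ₗ map β (map β β) ∘ₗ map α Δ ∘ₗ Δ := by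
  have hαβ : α ∘ₗ β = β ∘ₗ α := LinearMap.ext hβα
  rw [← hβΔ, ← LinearMap.comp_assoc, ← map_comp, LinearMap.comp_assoc, hαβ,
    LinearMap.comp_assoc, ← hβΔ]
  simp only [map_comp, LinearMap.comp_assoc]

theorem IsHomLieSupercoalgebra.twist (h : IsHomLieSupercoalgebra σ α Δ)
    (hβσ : ∀ x, σ (β x) = β (σ x)) (hβα : ∀ x, α (β x) = β (α x))
    (hβΔ : map β β ∘ₗ Δ = Δ ∘ₗ β) :
    IsHomLieSupercoalgebra σ (β ∘ₗ α) (Δ ∘ₗ β) := by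
  obtain ⟨hσσ, hσα, hσΔ, hIm, hcoJac⟩ := h
  refine ⟨hσσ, fun x => ?_, ?_, fun x => hIm (β x), ?_⟩
  · simp only [LinearMap.comp_apply, hβσ, hσα]
  · rw [← LinearMap.comp_assoc, hσΔ, LinearMap.comp_assoc, LinearMap.comp_assoc]
    exact congrArg (Δ ∘ₗ ·) (LinearMap.ext hβσ)
  · have hξ (t) : superCyclic σ (map β (map β β) t) = map β (map β β) (superCyclic σ t) :=
      LinearMap.congr_fun (superCyclic_comp_map_map_map hβσ) t
    have hβ3 : (LinearMap.id + superCyclic σ + superCyclic σ ∘ₗ superCyclic σ)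
        ∘ₗ map β (map β β) = map β (map β β)
          ∘ₗ (LinearMap.id + superCyclic σ + superCyclic σ ∘ₗ superCyclic σ) :=
      LinearMap.ext fun t => by
        simp only [LinearMap.comp_apply, LinearMap.add_apply, LinearMap.id_apply, hξ, map_add]
    rw [map_twist_comp_twist hβα hβΔ, ← LinearMap.comp_assoc, hβ3, LinearMap.comp_assoc,
      ← LinearMap.comp_assoc _ (map β (map β β)), hβ3]
    simp only [LinearMap.comp_assoc, hcoJac, LinearMap.comp_zero]

theorem adT_twist_comp_map (hβσ : ∀ x, σ (β x) = β (σ x)) (hβα : ∀ x, α (β x) = β (α x))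
    (hβbr : ∀ x y, β (br x y) = br (β x) (β y)) (p : ZMod 2) (z : L) :
    adT σ (br.compr₂ β) (β ∘ₗ α) p (β z) ∘ₗ map β β
      = map β β ∘ₗ map β β ∘ₗ adT σ br α p z := by
  refine TensorProduct.ext' fun a b => ?_
  simp only [adT, signPow, LinearMap.comp_apply, LinearMap.add_apply, map_tmul,
    LinearMap.compr₂_apply, LinearMap.smul_apply, LinearMap.id_apply, map_add, map_smul,
    add_tmul, hβσ, hβα, hβbr]

theorem IsHomLieSuperbialgebra.twist (h : IsHomLieSuperbialgebra σ br α Δ)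
    (hβσ : ∀ x, σ (β x) = β (σ x)) (hβα : ∀ x, α (β x) = β (α x))
    (hβbr : ∀ x y, β (br x y) = br (β x) (β y)) (hβΔ : map β β ∘ₗ Δ = Δ ∘ₗ β) :
    IsHomLieSuperbialgebra σ (br.compr₂ β) (β ∘ₗ α) (Δ ∘ₗ β) := by
  obtain ⟨halg, hcoalg, hcompat⟩ := h
  refine ⟨halg.twist hβσ hβbr, hcoalg.twist hβσ hβα hβΔ, fun p q x y hx hy => ?_⟩
  have hΔβ (t : L) : Δ (β t) = map β β (Δ t) := (LinearMap.congr_fun hβΔ t).symm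
  have had (r : ZMod 2) (z : L) (t : L ⊗[K] L) :
      adT σ (br.compr₂ β) (β ∘ₗ α) r (β (α z)) (map β β t)
        = map β β (map β β (adT σ br α r (α z) t)) :=
    LinearMap.congr_fun (adT_twist_comp_map hβσ hβα hβbr r (α z)) t
  simp only [LinearMap.comp_apply, LinearMap.compr₂_apply, hΔβ, had,
    hcompat p q x y hx hy, map_sub, map_smul]

theorem IsMultiplicative.twist (h : IsMultiplicative br α) (hβα : ∀ x, α (β x) = β (α x))
    (hβbr : ∀ x y, β (br x y) = br (β x) (β y)) :
    IsMultiplicative (br.compr₂ β) (β ∘ₗ α) := fun x y => by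
  simp only [LinearMap.comp_apply, LinearMap.compr₂_apply]
  rw [hβα, h, hβbr]

theorem IsComultiplicative.twist (h : IsComultiplicative α Δ) (hβα : ∀ x, α (β x) = β (α x))
    (hβΔ : map β β ∘ₗ Δ = Δ ∘ₗ β) :
    IsComultiplicative (β ∘ₗ α) (Δ ∘ₗ β) := by
  have hαβ : α ∘ₗ β = β ∘ₗ α := LinearMap.ext hβα
  have hΔβ (t : L) : Δ (β t) = map β β (Δ t) := (LinearMap.congr_fun hβΔ t).symm
  have hΔα (t : L) : Δ (α t) = map α α (Δ t) := LinearMap.congr_fun h t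
  have hmap : map β β ∘ₗ map β β ∘ₗ map α α = map (β ∘ₗ α) (β ∘ₗ α) ∘ₗ map β β := by
    rw [← map_comp, ← map_comp, ← map_comp, LinearMap.comp_assoc, hαβ]
  refine LinearMap.ext fun x => ?_
  simpa only [LinearMap.comp_apply, hΔβ, hΔα] using LinearMap.congr_fun hmap (Δ x)

end Twist

theorem homLieSuperbialgebra_twist_general
    {K : Type*} [Field K] {L : Type*} [AddCommGroup L] [Module K L]
    (σ : L →ₗ[K] L) (br : L →ₗ[K] L →ₗ[K] L) (α : L →ₗ[K] L) (Δ : L →ₗ[K] L ⊗[K] L)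
    (β : L →ₗ[K] L)
    (hbi : IsHomLieSuperbialgebra σ br α Δ)
    (hβσ : ∀ x, σ (β x) = β (σ x))
    (hβα : ∀ x, α (β x) = β (α x))
    (hβbr : ∀ x y, β (br x y) = br (β x) (β y))
    (hβΔ : TensorProduct.map β β ∘ₗ Δ = Δ ∘ₗ β) :
    IsHomLieSuperbialgebra σ (br.compr₂ β) (β ∘ₗ α) (Δ ∘ₗ β)
      ∧ (IsMultiplicative br α ∧ IsComultiplicative α Δ →
          IsMultiplicative (br.compr₂ β) (β ∘ₗ α)
            ∧ IsComultiplicative (β ∘ₗ α) (Δ ∘ₗ β)) :=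
  ⟨hbi.twist hβσ hβα hβbr hβΔ,
    fun ⟨hmult, hcomult⟩ => ⟨hmult.twist hβα hβbr, hcomult.twist hβα hβΔ⟩⟩

/-- Twisting a Hom-Lie superbialgebra by an endomorphism
(Theorem 1.9 of the paper). -/
theorem homLieSuperbialgebra_twist
    {K : Type*} [Field K] [CharZero K] {L : Type*} [AddCommGroup L] [Module K L]
    (σ : L →ₗ[K] L) (br : L →ₗ[K] L →ₗ[K] L) (α : L →ₗ[K] L) (Δ : L →ₗ[K] L ⊗[K] L)
    (β : L →ₗ[K] L)
    (hbi : IsHomLieSuperbialgebra σ br α Δ)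
    (hβσ : ∀ x, σ (β x) = β (σ x))
    (hβα : ∀ x, α (β x) = β (α x))
    (hβbr : ∀ x y, β (br x y) = br (β x) (β y))
    (hβΔ : TensorProduct.map β β ∘ₗ Δ = Δ ∘ₗ β) :
    IsHomLieSuperbialgebra σ (br.compr₂ β) (β ∘ₗ α) (Δ ∘ₗ β)
      ∧ (IsMultiplicative br α ∧ IsComultiplicative α Δ →
          IsMultiplicative (br.compr₂ β) (β ∘ₗ α)
            ∧ IsComultiplicative (β ∘ₗ α) (Δ ∘ₗ β)) :=
  homLieSuperbialgebra_twist_general σ br α Δ β hbi hβσ hβα hβbr hβΔ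
end

section
/- Let g and h be Lie superbialgebras, and let α : g → g and β : h → h be Lie superbialgebra morphisms such that β and β^{⊗2} are injective. Then the following are equivalent: (1) the Hom-Lie superbialgebras g_α = (g, α∘[·,·]_g, Δ_g∘α, α) and h_β = (h, β∘[·,·]_h, Δ_h∘β, β) are isomorphic; (2) there exists a Lie superbialgebra isomorphism γ : g → h such that γ∘α = β∘γ. -/
open TensorProduct

variable (K : Type*) [Field K] [CharZero K]

variable {K}

/-! Once `γ` intertwines `α` and `β`, comultiplicativity of `α` and `β` moves the twists to the
target side: the twisted bracket and cobracket conditions become the untwisted ones followed by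
`β` resp. `β ⊗ β`, which injectivity cancels. Conversely, the intertwining relation is the
`α`-component of a morphism of the twisted structures. -/

section Twist

variable {k : Type*} [Field k]
  {L L₂ : Type*} [AddCommGroup L] [Module k L] [AddCommGroup L₂] [Module k L₂]
  {α₁ : L →ₗ[k] L} {α₂ : L₂ →ₗ[k] L₂} {f : L →ₗ[k] L₂}

theorem IsBialgMorphism.isComultiplicative {σ : L →ₗ[k] L} {br : L →ₗ[k] L →ₗ[k] L}
    {Δ : L →ₗ[k] L ⊗[k] L}
    (h : IsBialgMorphism σ br LinearMap.id Δ σ br LinearMap.id Δ α₁) :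
    IsComultiplicative α₁ Δ :=
  h.2.2.2.symm

theorem map_compr₂_iff_of_comp_eq (hf : f ∘ₗ α₁ = α₂ ∘ₗ f) (hα₂ : Function.Injective α₂)
    (br₁ : L →ₗ[k] L →ₗ[k] L) (br₂ : L₂ →ₗ[k] L₂ →ₗ[k] L₂) :
    (∀ x y, f (br₁.compr₂ α₁ x y) = br₂.compr₂ α₂ (f x) (f y))
      ↔ ∀ x y, f (br₁ x y) = br₂ (f x) (f y) := by
  have hfα (z : L) : f (α₁ z) = α₂ (f z) := LinearMap.congr_fun hf z
  simp only [LinearMap.compr₂_apply, hfα, hα₂.eq_iff]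

theorem map_comp_cobracket_iff_of_comp_eq (hf : f ∘ₗ α₁ = α₂ ∘ₗ f)
    {Δ₁ : L →ₗ[k] L ⊗[k] L} {Δ₂ : L₂ →ₗ[k] L₂ ⊗[k] L₂}
    (h₁ : IsComultiplicative α₁ Δ₁) (h₂ : IsComultiplicative α₂ Δ₂)
    (hα₂₂ : Function.Injective (TensorProduct.map α₂ α₂)) :
    TensorProduct.map f f ∘ₗ (Δ₁ ∘ₗ α₁) = (Δ₂ ∘ₗ α₂) ∘ₗ f
      ↔ TensorProduct.map f f ∘ₗ Δ₁ = Δ₂ ∘ₗ f := by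
  have hl : TensorProduct.map f f ∘ₗ (Δ₁ ∘ₗ α₁)
      = TensorProduct.map α₂ α₂ ∘ₗ (TensorProduct.map f f ∘ₗ Δ₁) := by
    rw [h₁, ← LinearMap.comp_assoc, ← TensorProduct.map_comp, hf, TensorProduct.map_comp,
      LinearMap.comp_assoc]
  have hr : (Δ₂ ∘ₗ α₂) ∘ₗ f = TensorProduct.map α₂ α₂ ∘ₗ (Δ₂ ∘ₗ f) := by
    rw [h₂, LinearMap.comp_assoc]
  rw [hl, hr, LinearMap.cancel_left hα₂₂]

theorem isBialgMorphism_twist_iff {σ₁ : L →ₗ[k] L} {br₁ : L →ₗ[k] L →ₗ[k] L}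
    {Δ₁ : L →ₗ[k] L ⊗[k] L} {σ₂ : L₂ →ₗ[k] L₂} {br₂ : L₂ →ₗ[k] L₂ →ₗ[k] L₂}
    {Δ₂ : L₂ →ₗ[k] L₂ ⊗[k] L₂}
    (h₁ : IsComultiplicative α₁ Δ₁) (h₂ : IsComultiplicative α₂ Δ₂)
    (hα₂ : Function.Injective α₂) (hα₂₂ : Function.Injective (TensorProduct.map α₂ α₂)) :
    IsBialgMorphism σ₁ (br₁.compr₂ α₁) α₁ (Δ₁ ∘ₗ α₁) σ₂ (br₂.compr₂ α₂) α₂ (Δ₂ ∘ₗ α₂) f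
      ↔ IsBialgMorphism σ₁ br₁ LinearMap.id Δ₁ σ₂ br₂ LinearMap.id Δ₂ f
        ∧ f ∘ₗ α₁ = α₂ ∘ₗ f := by
  constructor
  · rintro ⟨hσ, hα, hbr, hΔ⟩
    have hf : f ∘ₗ α₁ = α₂ ∘ₗ f := LinearMap.ext fun x => (hα x).symm
    exact ⟨⟨hσ, fun _ => rfl, (map_compr₂_iff_of_comp_eq hf hα₂ br₁ br₂).1 hbr,
      (map_comp_cobracket_iff_of_comp_eq hf h₁ h₂ hα₂₂).1 hΔ⟩, hf⟩
  · rintro ⟨⟨hσ, -, hbr, hΔ⟩, hf⟩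
    exact ⟨hσ, fun x => (LinearMap.congr_fun hf x).symm,
      (map_compr₂_iff_of_comp_eq hf hα₂ br₁ br₂).2 hbr,
      (map_comp_cobracket_iff_of_comp_eq hf h₁ h₂ hα₂₂).2 hΔ⟩

end Twist

theorem homLieSuperbialgebra_twist_iso_iff_general
    {K : Type*} [Field K]
    {G : Type*} [AddCommGroup G] [Module K G] {H : Type*} [AddCommGroup H] [Module K H]
    (σg : G →ₗ[K] G) (brg : G →ₗ[K] G →ₗ[K] G) (Δg : G →ₗ[K] G ⊗[K] G)
    (σh : H →ₗ[K] H) (brh : H →ₗ[K] H →ₗ[K] H) (Δh : H →ₗ[K] H ⊗[K] H)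
    (α : G →ₗ[K] G) (β : H →ₗ[K] H)
    (hα : IsBialgMorphism σg brg LinearMap.id Δg σg brg LinearMap.id Δg α)
    (hβ : IsBialgMorphism σh brh LinearMap.id Δh σh brh LinearMap.id Δh β)
    (hβinj : Function.Injective β)
    (hβ2inj : Function.Injective (TensorProduct.map β β)) :
    (∃ γ : G ≃ₗ[K] H,
        IsBialgMorphism σg (brg.compr₂ α) α (Δg ∘ₗ α)
          σh (brh.compr₂ β) β (Δh ∘ₗ β) γ.toLinearMap)
      ↔ (∃ γ : G ≃ₗ[K] H,
          IsBialgMorphism σg brg LinearMap.id Δg σh brh LinearMap.id Δh γ.toLinearMap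
            ∧ γ.toLinearMap ∘ₗ α = β ∘ₗ γ.toLinearMap) :=
  exists_congr fun _ =>
    isBialgMorphism_twist_iff hα.isComultiplicative hβ.isComultiplicative hβinj hβ2inj

/-- `g_α ≅ h_β` iff there is a Lie superbialgebra isomorphism
`γ : g → h` intertwining `α` and `β`. -/
theorem homLieSuperbialgebra_twist_iso_iff
    {K : Type*} [Field K] [CharZero K]
    {G : Type*} [AddCommGroup G] [Module K G] {H : Type*} [AddCommGroup H] [Module K H]
    (σg : G →ₗ[K] G) (brg : G →ₗ[K] G →ₗ[K] G) (Δg : G →ₗ[K] G ⊗[K] G)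
    (σh : H →ₗ[K] H) (brh : H →ₗ[K] H →ₗ[K] H) (Δh : H →ₗ[K] H ⊗[K] H)
    (hg : IsHomLieSuperbialgebra σg brg (LinearMap.id : G →ₗ[K] G) Δg)
    (hh : IsHomLieSuperbialgebra σh brh (LinearMap.id : H →ₗ[K] H) Δh)
    (α : G →ₗ[K] G) (β : H →ₗ[K] H)
    (hα : IsBialgMorphism σg brg LinearMap.id Δg σg brg LinearMap.id Δg α)
    (hβ : IsBialgMorphism σh brh LinearMap.id Δh σh brh LinearMap.id Δh β)
    (hβinj : Function.Injective β)
    (hβ2inj : Function.Injective (TensorProduct.map β β)) :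
    (∃ γ : G ≃ₗ[K] H,
        IsBialgMorphism σg (brg.compr₂ α) α (Δg ∘ₗ α)
          σh (brh.compr₂ β) β (Δh ∘ₗ β) γ.toLinearMap)
      ↔ (∃ γ : G ≃ₗ[K] H,
          IsBialgMorphism σg brg LinearMap.id Δg σh brh LinearMap.id Δh γ.toLinearMap
            ∧ γ.toLinearMap ∘ₗ α = β ∘ₗ γ.toLinearMap) :=
  homLieSuperbialgebra_twist_iso_iff_general σg brg Δg σh brh Δh α β hα hβ hβinj hβ2inj
end

section
/- Let g be a Lie superbialgebra. Then there is a bijection between (1) the set of isomorphism classes of Hom-Lie superbialgebras g_α = (g, α∘[·,·], Δ∘α, α) with α an invertible Lie superbialgebra morphism, and (2) the set of conjugacy classes in the group Aut(g) of Lie superbialgebra automorphisms of g. -/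
open TensorProduct

variable (K : Type*) [Field K] [CharZero K]

variable {K}

/-!
A linear isomorphism `γ : g_α → g_β` commutes with the twisting maps exactly when
`β ∘ γ = γ ∘ α`. Given this, the twisted bracket and cobracket conditions
`γ (α [x, y]) = β [γ x, γ y]` and `(γ ⊗ γ) ∘ Δ ∘ α = Δ ∘ β ∘ γ` reduce, after cancelling the
injective `β` on the left and the surjective `α` on the right, to `γ` being a morphism of `g`.
So isomorphic twists are precisely twists by conjugate automorphisms, and the two equivalence
relations on `Aut(g)` coincide.
-/

section Twist

variable {F : Type*} [Field F]
  {L₁ L₂ : Type*} [AddCommGroup L₁] [Module F L₁] [AddCommGroup L₂] [Module F L₂]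
  {σ₁ : L₁ →ₗ[F] L₁} {br₁ : L₁ →ₗ[F] L₁ →ₗ[F] L₁} {Δ₁ : L₁ →ₗ[F] L₁ ⊗[F] L₁}
  {σ₂ : L₂ →ₗ[F] L₂} {br₂ : L₂ →ₗ[F] L₂ →ₗ[F] L₂} {Δ₂ : L₂ →ₗ[F] L₂ ⊗[F] L₂}
  {a : L₁ →ₗ[F] L₁} {b : L₂ →ₗ[F] L₂} {γ : L₁ →ₗ[F] L₂}

theorem isBialgMorphism_twist_of_isBialgMorphism
    (hγ : IsBialgMorphism σ₁ br₁ LinearMap.id Δ₁ σ₂ br₂ LinearMap.id Δ₂ γ)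
    (hconj : b ∘ₗ γ = γ ∘ₗ a) :
    IsBialgMorphism σ₁ (br₁.compr₂ a) a (Δ₁ ∘ₗ a) σ₂ (br₂.compr₂ b) b (Δ₂ ∘ₗ b) γ := by
  obtain ⟨hσ, -, hbr, hΔ⟩ := hγ
  refine ⟨hσ, LinearMap.congr_fun hconj, fun x y => ?_, ?_⟩
  · calc γ (a (br₁ x y)) = b (γ (br₁ x y)) := (LinearMap.congr_fun hconj _).symm
      _ = b (br₂ (γ x) (γ y)) := congrArg b (hbr x y)
  · calc TensorProduct.map γ γ ∘ₗ Δ₁ ∘ₗ a = Δ₂ ∘ₗ γ ∘ₗ a := by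
          rw [← LinearMap.comp_assoc, hΔ, LinearMap.comp_assoc]
      _ = (Δ₂ ∘ₗ b) ∘ₗ γ := by rw [← hconj, LinearMap.comp_assoc]

theorem isBialgMorphism_of_isBialgMorphism_twist (ha : Function.Surjective a)
    (hb : Function.Injective b)
    (hγ : IsBialgMorphism σ₁ (br₁.compr₂ a) a (Δ₁ ∘ₗ a) σ₂ (br₂.compr₂ b) b (Δ₂ ∘ₗ b) γ) :
    IsBialgMorphism σ₁ br₁ LinearMap.id Δ₁ σ₂ br₂ LinearMap.id Δ₂ γ ∧ b ∘ₗ γ = γ ∘ₗ a := by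
  obtain ⟨hσ, hα, hbr, hΔ⟩ := hγ
  have hconj : b ∘ₗ γ = γ ∘ₗ a := LinearMap.ext hα
  refine ⟨⟨hσ, fun _ => rfl, fun x y => hb ?_, ?_⟩, hconj⟩
  · calc b (γ (br₁ x y)) = γ (a (br₁ x y)) := hα _
      _ = b (br₂ (γ x) (γ y)) := hbr x y
  · refine (LinearMap.cancel_right ha).mp ?_
    calc (TensorProduct.map γ γ ∘ₗ Δ₁) ∘ₗ a = (Δ₂ ∘ₗ b) ∘ₗ γ := hΔ
      _ = (Δ₂ ∘ₗ γ) ∘ₗ a := by rw [LinearMap.comp_assoc, hconj, LinearMap.comp_assoc]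

theorem isBialgMorphism_twist_iff_s5 (ha : Function.Surjective a) (hb : Function.Injective b) :
    IsBialgMorphism σ₁ (br₁.compr₂ a) a (Δ₁ ∘ₗ a) σ₂ (br₂.compr₂ b) b (Δ₂ ∘ₗ b) γ ↔
      IsBialgMorphism σ₁ br₁ LinearMap.id Δ₁ σ₂ br₂ LinearMap.id Δ₂ γ ∧ b ∘ₗ γ = γ ∘ₗ a :=
  ⟨isBialgMorphism_of_isBialgMorphism_twist ha hb,
    fun h => isBialgMorphism_twist_of_isBialgMorphism h.1 h.2⟩

end Twist

theorem homLieSuperbialgebra_twist_classes_equiv_conjugacy_classes_general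
    {K : Type*} [Field K] {G : Type*} [AddCommGroup G] [Module K G]
    (σ : G →ₗ[K] G) (br : G →ₗ[K] G →ₗ[K] G) (Δ : G →ₗ[K] G ⊗[K] G) :
    Nonempty (
      Quot (fun (a b : {e : G ≃ₗ[K] G //
          IsBialgMorphism σ br LinearMap.id Δ σ br LinearMap.id Δ e.toLinearMap}) =>
        ∃ γ : G ≃ₗ[K] G,
          IsBialgMorphism σ (br.compr₂ a.1.toLinearMap) a.1.toLinearMap (Δ ∘ₗ a.1.toLinearMap)
            σ (br.compr₂ b.1.toLinearMap) b.1.toLinearMap (Δ ∘ₗ b.1.toLinearMap) γ.toLinearMap)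
      ≃
      Quot (fun (a b : {e : G ≃ₗ[K] G //
          IsBialgMorphism σ br LinearMap.id Δ σ br LinearMap.id Δ e.toLinearMap}) =>
        ∃ γ : {e : G ≃ₗ[K] G //
          IsBialgMorphism σ br LinearMap.id Δ σ br LinearMap.id Δ e.toLinearMap},
          γ.1.toLinearMap ∘ₗ a.1.toLinearMap = b.1.toLinearMap ∘ₗ γ.1.toLinearMap)) := by
  refine ⟨Quot.congr (Equiv.refl _) fun a b => ?_⟩
  simp only [Equiv.refl_apply, isBialgMorphism_twist_iff_s5 a.1.surjective b.1.injective]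
  constructor
  · rintro ⟨γ, hγ, hconj⟩
    exact ⟨⟨γ, hγ⟩, hconj.symm⟩
  · rintro ⟨γ, hconj⟩
    exact ⟨γ.1, γ.2, hconj.symm⟩

/-- For a Lie superbialgebra `g`, isomorphism classes of
Hom-Lie superbialgebras `g_α` (with `α` an invertible Lie superbialgebra morphism)
are in bijection with conjugacy classes in `Aut(g)`. -/
theorem homLieSuperbialgebra_twist_classes_equiv_conjugacy_classes
    {K : Type*} [Field K] [CharZero K] {G : Type*} [AddCommGroup G] [Module K G]
    (σ : G →ₗ[K] G) (br : G →ₗ[K] G →ₗ[K] G) (Δ : G →ₗ[K] G ⊗[K] G)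
    (hg : IsHomLieSuperbialgebra σ br (LinearMap.id : G →ₗ[K] G) Δ) :
    Nonempty (
      Quot (fun (a b : {e : G ≃ₗ[K] G //
          IsBialgMorphism σ br LinearMap.id Δ σ br LinearMap.id Δ e.toLinearMap}) =>
        ∃ γ : G ≃ₗ[K] G,
          IsBialgMorphism σ (br.compr₂ a.1.toLinearMap) a.1.toLinearMap (Δ ∘ₗ a.1.toLinearMap)
            σ (br.compr₂ b.1.toLinearMap) b.1.toLinearMap (Δ ∘ₗ b.1.toLinearMap) γ.toLinearMap)
      ≃
      Quot (fun (a b : {e : G ≃ₗ[K] G //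
          IsBialgMorphism σ br LinearMap.id Δ σ br LinearMap.id Δ e.toLinearMap}) =>
        ∃ γ : {e : G ≃ₗ[K] G //
          IsBialgMorphism σ br LinearMap.id Δ σ br LinearMap.id Δ e.toLinearMap},
          γ.1.toLinearMap ∘ₗ a.1.toLinearMap = b.1.toLinearMap ∘ₗ γ.1.toLinearMap)) :=
  homLieSuperbialgebra_twist_classes_equiv_conjugacy_classes_general σ br Δ
end
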